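/- arXiv:math/9811018 — 3 statements merged into one kernel-verified Lean document; each statement's English description precedes it below -/
import Mathlib

section
/- Let K be a profinite group with an open normal subgroup K' such that K' is pro-ℓ. Then, up to isomorphism, there are only finitely many simple continuous discrete ℤ_ℓ-torsion K-modules, and each occurs as a Jordan–Hölder factor of the induced module Ind_{K'}^{K}(ℤ/ℓℤ) (induction from the trivial K'-module ℤ/ℓℤ). -/
/-- A continuous discrete `ℤ_ℓ`-torsion module over a topological group `K`:
a torsion abelian `ℓ`-group with a `K`-action for which every element has open
stabilizer. -/
structure DiscreteTorsionModule (ℓ : ℕ) (K : Type) [Group K] [TopologicalSpace K] where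
  M : Type
  [addCommGroup : AddCommGroup M]
  [action : DistribMulAction K M]
  torsion : ∀ m : M, ∃ n : ℕ, (ℓ ^ n : ℕ) • m = 0
  openStabilizers : ∀ m : M, IsOpen {g : K | g • m = m}

attribute [instance] DiscreteTorsionModule.addCommGroup DiscreteTorsionModule.action

/-- Simplicity of a continuous discrete torsion module: it is nonzero and has no
nontrivial proper `K`-stable subgroup. -/
def DiscreteTorsionModule.IsSimple {ℓ : ℕ} {K : Type} [Group K] [TopologicalSpace K]
    (X : DiscreteTorsionModule ℓ K) : Prop :=
  (∃ m : X.M, m ≠ 0) ∧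
  ∀ A : AddSubgroup X.M, (∀ (g : K) (a : X.M), a ∈ A → g • a ∈ A) → A = ⊥ ∨ A = ⊤

/-- Equivariant isomorphism of continuous discrete torsion modules. -/
def DiscreteTorsionModule.Iso {ℓ : ℕ} {K : Type} [Group K] [TopologicalSpace K]
    (X Y : DiscreteTorsionModule ℓ K) : Prop :=
  ∃ e : X.M ≃+ Y.M, ∀ (g : K) (m : X.M), e (g • m) = g • e m

/-- `X` occurs as a Jordan–Hölder factor (equivariant subquotient) of the induced module
`Ind_{K'}^K (ℤ/ℓℤ) = { f : K/K' → ℤ/ℓℤ }`, on which `K` acts by translations. -/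
def OccursInInducedModule (ℓ : ℕ) (K : Type) [Group K] [TopologicalSpace K]
    (K' : Subgroup K) [K'.Normal] (X : DiscreteTorsionModule ℓ K) : Prop :=
  ∃ (B : AddSubgroup ((K ⧸ K') → ZMod ℓ))
    (hB : ∀ (g : K) (f : (K ⧸ K') → ZMod ℓ), f ∈ B →
      (fun x => f ((QuotientGroup.mk g)⁻¹ * x)) ∈ B)
    (φ : B →+ X.M), Function.Surjective φ ∧
      ∀ (g : K) (f : (K ⧸ K') → ZMod ℓ) (hf : f ∈ B),
        φ ⟨fun x => f ((QuotientGroup.mk g)⁻¹ * x), hB g f hf⟩ = g • φ ⟨f, hf⟩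

/-! A simple module `X` is killed by `ℓ`, since its `ℓ`-torsion is a nonzero stable subgroup, and
it is finite, being generated by the finite orbit of any nonzero vector. Hence the pro-`ℓ` group
`K'` acts on `X` through a finite `ℓ`-group and, as `ℓ ∣ |X|`, fixes a nonzero vector; the
`K'`-fixed points form a nonzero `K`-stable subgroup, so `K'` acts trivially. For `m₀ ≠ 0` the map
`f ↦ ∑ₓ f x • x m₀` is then a well-defined equivariant map `Ind_{K'}^K (ℤ/ℓℤ) → X`, onto by
simplicity. So `X` is the quotient of the finite module `Ind_{K'}^K (ℤ/ℓℤ)` by the kernel, and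
there are only finitely many kernels. -/

theorem AddSubgroup.smul_mem_closure {G M : Type*} [Monoid G] [AddGroup M]
    [DistribMulAction G M] {S : Set M} (hS : ∀ (g : G), ∀ s ∈ S, g • s ∈ S) (g : G) {a : M}
    (ha : a ∈ AddSubgroup.closure S) : g • a ∈ AddSubgroup.closure S := by
  have : AddSubgroup.closure S ≤ (AddSubgroup.closure S).comap (DistribSMul.toAddMonoidHom M g) :=
    (AddSubgroup.closure_le _).2 fun s hs => AddSubgroup.subset_closure (hS g s hs)
  exact this ha

theorem MulAction.mem_fixedPoints_range_toPermHom {G α : Type*} [Group G] [MulAction G α]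
    {a : α} : a ∈ fixedPoints (toPermHom G α).range α ↔ a ∈ fixedPoints G α := by
  constructor
  · intro h g
    exact h ⟨toPermHom G α g, g, rfl⟩
  · rintro h ⟨_, g, rfl⟩
    exact h g

theorem MulAction.isPGroup_range_toPermHom {p : ℕ} {G α : Type*} [Group G] [TopologicalSpace G]
    [MulAction G α] [Finite α]
    (hG : ∀ N : Subgroup G, N.Normal → IsOpen (N : Set G) → ∃ n : ℕ, Nat.card (G ⧸ N) = p ^ n)
    (hstab : ∀ a : α, IsOpen (stabilizer G a : Set G)) :
    IsPGroup p (toPermHom G α).range := by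
  have hker : ((toPermHom G α).ker : Set G) = ⋂ a : α, (stabilizer G a : Set G) := by
    ext g
    simp [Equiv.ext_iff]
  obtain ⟨n, hn⟩ := hG _ (toPermHom G α).normal_ker (hker ▸ isOpen_iInter_of_finite hstab)
  exact IsPGroup.of_card <|
    (Nat.card_congr (QuotientGroup.quotientKerEquivRange _).toEquiv).symm.trans hn

theorem exists_fin_representatives_of_finite {α β : Type*} [Finite β] (f : α → β)
    (R : α → α → Prop) (hf : ∀ x y, f x = f y → R x y) :
    ∃ (n : ℕ) (Rep : Fin n → α), ∀ x, ∃ i, R x (Rep i) := by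
  obtain ⟨n, ⟨e⟩⟩ := Finite.exists_equiv_fin (Set.range f)
  refine ⟨n, fun i => (e.symm i).2.choose, fun x => ⟨e ⟨f x, x, rfl⟩, hf _ _ ?_⟩⟩
  rw [(e.symm _).2.choose_spec, e.symm_apply_apply]

section Induced

variable {ℓ : ℕ} {K M : Type*} [Group K] (K' : Subgroup K) [AddCommGroup M] [DistribMulAction K M]

theorem smul_eq_smul_of_mk_eq (hK' : ∀ g ∈ K', ∀ m : M, g • m = m) {a b : K}
    (hab : (a : K ⧸ K') = b) (m : M) : a • m = b • m := by
  rw [← mul_inv_cancel_left a b, mul_smul, hK' _ (QuotientGroup.eq.mp hab)]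

theorem exists_induced_equivariantHom [K'.Normal] [Finite (K ⧸ K')] (hℓ : ∀ m : M, ℓ • m = 0)
    (hK' : ∀ g ∈ K', ∀ m : M, g • m = m) (m₀ : M) :
    ∃ φ : ((K ⧸ K') → ZMod ℓ) →+ M, m₀ ∈ φ.range ∧
      ∀ (g : K) (f : (K ⧸ K') → ZMod ℓ),
        φ (fun x => f ((QuotientGroup.mk g)⁻¹ * x)) = g • φ f := by
  classical
  let := AddCommGroup.zmodModule hℓ
  have := Fintype.ofFinite (K ⧸ K')
  let v : K ⧸ K' → M := fun x => x.out • m₀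
  have hv : ∀ (g : K) x, g • v x = v (g * x) := fun g x =>
    (mul_smul g x.out m₀).symm.trans (smul_eq_smul_of_mk_eq K' hK' (by simp) m₀)
  refine ⟨(Fintype.linearCombination (ZMod ℓ) v).toAddMonoidHom, ?_, fun g f => ?_⟩
  · refine ⟨Pi.single 1 1, ?_⟩
    simpa [v] using smul_eq_smul_of_mk_eq K' hK' (a := (1 : K ⧸ K').out) (b := 1) (by simp) m₀
  · simp only [LinearMap.toAddMonoidHom_coe, Fintype.linearCombination_apply, Finset.smul_sum]
    refine (Fintype.sum_equiv (Equiv.mulLeft (QuotientGroup.mk g : K ⧸ K')) _ _ fun x => ?_).symm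
    have hcomm := ZMod.map_smul (DistribSMul.toAddMonoidHom M g) (f x) (v x)
    simp only [DistribSMul.toAddMonoidHom_apply] at hcomm
    simp [hcomm, hv]

end Induced

namespace DiscreteTorsionModule

variable {ℓ : ℕ} {K : Type} [Group K] [TopologicalSpace K] {X : DiscreteTorsionModule ℓ K}

theorem IsSimple.eq_top_of_mem (hX : X.IsSimple) {A : AddSubgroup X.M}
    (hA : ∀ (g : K) (a : X.M), a ∈ A → g • a ∈ A) {m : X.M} (hm : m ∈ A) (hm0 : m ≠ 0) :
    A = ⊤ :=
  (hX.2 A hA).resolve_left fun h => hm0 (by rwa [h, AddSubgroup.mem_bot] at hm)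

theorem IsSimple.nsmul_eq_zero (hX : X.IsSimple) (m : X.M) : ℓ • m = 0 := by
  let A := (nsmulAddMonoidHom ℓ : X.M →+ X.M).ker
  have hmem : ∀ a, a ∈ A ↔ ℓ • a = 0 := fun a => by simp [A]
  have hA : ∀ (g : K) (a : X.M), a ∈ A → g • a ∈ A := fun g a ha => by
    rw [hmem, ← smul_comm g ℓ a, (hmem a).1 ha, smul_zero]
  rcases hX.2 A hA with hbot | htop
  · have hinj : ∀ (n : ℕ) (m : X.M), ℓ ^ n • m = 0 → m = 0 := by
      intro n
      induction n with
      | zero => simp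
      | succ n ih =>
        intro m hm
        rw [pow_succ, mul_smul] at hm
        simpa [hbot] using (hmem m).2 (ih _ hm)
    obtain ⟨m₀, hm₀⟩ := hX.1
    obtain ⟨n, hn⟩ := X.torsion m₀
    exact absurd (hinj n m₀ hn) hm₀
  · exact (hmem m).1 (htop ▸ AddSubgroup.mem_top m)

theorem IsSimple.finite [SeparatelyContinuousMul K] [CompactSpace K] (hℓ : ℓ ≠ 0)
    (hX : X.IsSimple) : Finite X.M := by
  obtain ⟨m₀, hm₀⟩ := hX.1
  have : Finite (K ⧸ MulAction.stabilizer K m₀) :=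
    Subgroup.quotient_finite_of_isOpen _ (X.openStabilizers m₀)
  have horbit : (MulAction.orbit K m₀).Finite :=
    Set.finite_coe_iff.1 (.of_equiv _ (MulAction.orbitEquivQuotientStabilizer K m₀).symm)
  have hclosure : AddSubgroup.closure (MulAction.orbit K m₀) = ⊤ :=
    hX.eq_top_of_mem
      (fun g _ => AddSubgroup.smul_mem_closure
        (fun g _ hs => MulAction.mapsTo_smul_orbit g m₀ hs) g)
      (AddSubgroup.subset_closure (MulAction.mem_orbit_self m₀)) hm₀
  have : AddGroup.FG X.M := AddGroup.fg_iff.2 ⟨_, hclosure, horbit⟩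
  exact AddCommGroup.finite_of_fg_isAddTorsion _ fun m =>
    isOfFinAddOrder_iff_nsmul_eq_zero.2 ⟨ℓ, Nat.pos_of_ne_zero hℓ, hX.nsmul_eq_zero m⟩

theorem IsSimple.smul_eq_self_of_mem [SeparatelyContinuousMul K] [CompactSpace K]
    (hℓ : ℓ.Prime) (K' : Subgroup K) [K'.Normal]
    (hproell : ∀ N : Subgroup ↥K', N.Normal → IsOpen (N : Set ↥K') →
      ∃ n : ℕ, Nat.card (↥K' ⧸ N) = ℓ ^ n)
    (hX : X.IsSimple) : ∀ g ∈ K', ∀ m : X.M, g • m = m := by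
  have := Fact.mk hℓ
  have := hX.finite hℓ.ne_zero
  obtain ⟨m₀, hm₀⟩ := hX.1
  have hdvd : ℓ ∣ Nat.card X.M :=
    (addOrderOf_eq_prime (hX.nsmul_eq_zero m₀) hm₀).symm.dvd.trans (addOrderOf_dvd_natCard m₀)
  have hP : IsPGroup ℓ (MulAction.toPermHom K' X.M).range :=
    MulAction.isPGroup_range_toPermHom hproell
      fun m => (X.openStabilizers m).preimage continuous_subtype_val
  obtain ⟨b, hbfix, hb0⟩ := hP.exists_fixed_point_of_prime_dvd_card_of_fixed_point X.M hdvd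
    (MulAction.mem_fixedPoints_range_toPermHom.2 fun g => smul_zero (g : K))
  have hb : b ∈ FixedPoints.addSubgroup K' X.M :=
    MulAction.mem_fixedPoints_range_toPermHom.1 hbfix
  have htop := hX.eq_top_of_mem (fun g _ => smul_mem_fixedPoints_of_normal g) hb (Ne.symm hb0)
  exact fun g hg m => (htop ▸ AddSubgroup.mem_top m : m ∈ FixedPoints.addSubgroup K' X.M) ⟨g, hg⟩

theorem IsSimple.exists_induced_equivariantHom_surjective [SeparatelyContinuousMul K]
    [CompactSpace K] (hℓ : ℓ.Prime) (K' : Subgroup K) [K'.Normal] (hopen : IsOpen (K' : Set K))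
    (hproell : ∀ N : Subgroup ↥K', N.Normal → IsOpen (N : Set ↥K') →
      ∃ n : ℕ, Nat.card (↥K' ⧸ N) = ℓ ^ n)
    (hX : X.IsSimple) :
    ∃ φ : ((K ⧸ K') → ZMod ℓ) →+ X.M, Function.Surjective φ ∧
      ∀ (g : K) (f : (K ⧸ K') → ZMod ℓ),
        φ (fun x => f ((QuotientGroup.mk g)⁻¹ * x)) = g • φ f := by
  have := Subgroup.quotient_finite_of_isOpen K' hopen
  obtain ⟨m₀, hm₀⟩ := hX.1
  obtain ⟨φ, hm₀φ, hφ⟩ :=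
    exists_induced_equivariantHom K' hX.nsmul_eq_zero (hX.smul_eq_self_of_mem hℓ K' hproell) m₀
  have hrange : φ.range = ⊤ :=
    hX.eq_top_of_mem (by rintro g _ ⟨f, rfl⟩; exact ⟨_, hφ g f⟩) hm₀φ hm₀
  exact ⟨φ, AddMonoidHom.range_eq_top.1 hrange, hφ⟩

theorem iso_of_ker_eq {V : Type*} [AddGroup V] (τ : K → V → V) {Y : DiscreteTorsionModule ℓ K}
    {φ : V →+ X.M} {ψ : V →+ Y.M} (hφ : Function.Surjective φ) (hψ : Function.Surjective ψ)
    (hφτ : ∀ g v, φ (τ g v) = g • φ v) (hψτ : ∀ g v, ψ (τ g v) = g • ψ v)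
    (hker : φ.ker = ψ.ker) : X.Iso Y := by
  let e : X.M ≃+ Y.M := (QuotientAddGroup.quotientKerEquivOfSurjective φ hφ).symm.trans
    ((QuotientAddGroup.quotientAddEquivOfEq hker).trans
      (QuotientAddGroup.quotientKerEquivOfSurjective ψ hψ))
  have he : ∀ v, e (φ v) = ψ v := fun v => by
    have : (QuotientAddGroup.quotientKerEquivOfSurjective φ hφ).symm (φ v) = v :=
      (AddEquiv.symm_apply_eq _).2 rfl
    simp only [e, AddEquiv.trans_apply, this, QuotientAddGroup.quotientAddEquivOfEq_mk]
    rfl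
  refine ⟨e, fun g m => ?_⟩
  obtain ⟨v, rfl⟩ := hφ m
  rw [← hφτ, he, he, hψτ]

end DiscreteTorsionModule

theorem finitely_many_simple_torsion_modules_general
    (ℓ : ℕ) (hℓ : ℓ.Prime)
    (K : Type) [Group K] [TopologicalSpace K] [IsTopologicalGroup K]
    [CompactSpace K]
    (K' : Subgroup K) [K'.Normal] (hopen : IsOpen (K' : Set K))
    (hproell : ∀ N : Subgroup ↥K', N.Normal → IsOpen (N : Set ↥K') →
      ∃ n : ℕ, Nat.card (↥K' ⧸ N) = ℓ ^ n) :
    (∃ (n : ℕ) (Rep : Fin n → DiscreteTorsionModule ℓ K),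
      ∀ X : DiscreteTorsionModule ℓ K, X.IsSimple → ∃ i, X.Iso (Rep i)) ∧
    (∀ X : DiscreteTorsionModule ℓ K, X.IsSimple → OccursInInducedModule ℓ K K' X) := by
  choose φ hφ hφτ using fun X (hX : DiscreteTorsionModule.IsSimple X) =>
    hX.exists_induced_equivariantHom_surjective hℓ K' hopen hproell
  have := Subgroup.quotient_finite_of_isOpen K' hopen
  have : NeZero ℓ := ⟨hℓ.ne_zero⟩
  constructor
  · have hiso (X Y : {X : DiscreteTorsionModule ℓ K // X.IsSimple})
        (hXY : (φ X.1 X.2).ker = (φ Y.1 Y.2).ker) : X.1.Iso Y.1 :=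
      DiscreteTorsionModule.iso_of_ker_eq _ (hφ _ _) (hφ _ _) (hφτ _ _) (hφτ _ _) hXY
    obtain ⟨n, Rep, hRep⟩ :=
      exists_fin_representatives_of_finite (fun X : {X // X.IsSimple} => (φ X.1 X.2).ker) _ hiso
    exact ⟨n, fun i => (Rep i).1, fun X hX => hRep ⟨X, hX⟩⟩
  · intro X hX
    refine ⟨⊤, fun _ _ _ => AddSubgroup.mem_top _, (φ X hX).comp (⊤ : AddSubgroup _).subtype,
      fun m => ?_, fun g f _ => hφτ X hX g f⟩
    obtain ⟨f, rfl⟩ := hφ X hX m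
    exact ⟨⟨f, AddSubgroup.mem_top f⟩, rfl⟩

/-- Let `K` be a profinite group with an open normal subgroup `K'` which is pro-`ℓ`.
Then, up to equivariant isomorphism, there are only finitely many simple continuous
discrete `ℤ_ℓ`-torsion `K`-modules, and each of them occurs as a Jordan–Hölder factor
of the induced module `Ind_{K'}^K (ℤ/ℓℤ)` (induction of the trivial `K'`-module). -/
theorem finitely_many_simple_torsion_modules
    (ℓ : ℕ) (hℓ : ℓ.Prime)
    (K : Type) [Group K] [TopologicalSpace K] [IsTopologicalGroup K]
    [CompactSpace K] [TotallyDisconnectedSpace K]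
    (K' : Subgroup K) [K'.Normal] (hopen : IsOpen (K' : Set K))
    (hproell : ∀ N : Subgroup ↥K', N.Normal → IsOpen (N : Set ↥K') →
      ∃ n : ℕ, Nat.card (↥K' ⧸ N) = ℓ ^ n) :
    (∃ (n : ℕ) (Rep : Fin n → DiscreteTorsionModule ℓ K),
      ∀ X : DiscreteTorsionModule ℓ K, X.IsSimple → ∃ i, X.Iso (Rep i)) ∧
    (∀ X : DiscreteTorsionModule ℓ K, X.IsSimple → OccursInInducedModule ℓ K K' X) :=
  finitely_many_simple_torsion_modules_general ℓ hℓ K K' hopen hproell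
end

section
/- Let 𝔲 be a finite-dimensional nilpotent Lie algebra over a field F of characteristic 0, of dimension c, and V a finite-dimensional 𝔲-module. Then the Lie algebra homology H_0(𝔲, V) (the coinvariants V/𝔲V) is isomorphic to H^c(𝔲, V) ⊗ Λ^c 𝔲^* as vector spaces, i.e., the top Lie algebra cohomology twisted by the top exterior power of 𝔲 recovers the coinvariants (Poincaré duality for Lie algebra cohomology of nilpotent Lie algebras). -/
/-!
Fix a basis `b` of `𝔲`, indexed by `Fin (n + 1)`. Evaluation at `b` identifies top-degree
cochains with `V` and top-degree forms with `F`, so `H^{n+1}(𝔲, V) ⊗ Λ^{n+1} 𝔲^*` is `V`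
modulo the values `(dω)(b)`. The `n`-cochains are spanned by `x ↦ det_b (b k, x) • v`, and
the differential of such a cochain takes the value `⁅b k, v⁆ - tr (ad (b k)) • v` at `b`.
Since `𝔲` is nilpotent, `ad (b k)` is nilpotent and has trace zero, so these values span
exactly `𝔲 V`.
-/

theorem AlternatingMap.sum_apply {R M W ι κ : Type*} [Semiring R] [AddCommMonoid M]
    [Module R M] [AddCommMonoid W] [Module R W] (s : Finset κ) (f : κ → M [⋀^ι]→ₗ[R] W)
    (x : ι → M) :
    (∑ k ∈ s, f k) x = ∑ k ∈ s, f k x := by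
  induction s using Finset.cons_induction <;> simp_all

theorem Finset.sum_sum_ite_lt {ι R : Type*} [Fintype ι] [LinearOrder ι] [AddCommGroup R]
    (u : ι → R) (k : ι) :
    ∑ j, ∑ i, (if i < j then (if k = j then u i else if k = i then u j else 0) else 0) =
      ∑ m, u m - u k := by
  have hsplit : ∀ i j, (if i < j then (if k = j then u i else if k = i then u j else 0) else 0) =
      (if j = k then (if i < k then u i else 0) else 0) +
        (if i = k then (if k < j then u j else 0) else 0) := by
    intro i j
    split_ifs <;> grind
  have htri : ∀ m, u m =
      (if m < k then u m else 0) + (if k < m then u m else 0) + (if m = k then u m else 0) := by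
    intro m
    split_ifs <;> grind
  simp only [hsplit, Finset.sum_add_distrib, Finset.sum_ite_irrel, Finset.sum_const_zero,
    Fintype.sum_ite_eq']
  conv_rhs => rw [Finset.sum_congr rfl fun m _ => htri m]
  simp [Finset.sum_add_distrib]

namespace Module.Basis

variable {R M W : Type*} [CommRing R] [AddCommGroup M] [Module R M] [AddCommGroup W] [Module R W]

section

variable {ι : Type*} [Fintype ι] [DecidableEq ι] (b : Basis ι R M)

theorem det_update_self (i : ι) (y : M) : b.det (Function.update b i y) = b.repr y i := by
  rw [det_apply, toMatrix_update, toMatrix_self, ← Matrix.cramer_apply, Matrix.cramer_one]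
  rfl

theorem det_update_comp_perm (σ : Equiv.Perm ι) (i : ι) (y : M) :
    b.det (Function.update (b ∘ σ) i y) = Equiv.Perm.sign σ • b.repr y (σ i) := by
  have h := Function.update_comp_equiv b σ (σ i) y
  rw [Equiv.symm_apply_apply] at h
  rw [← h, AlternatingMap.map_perm, det_update_self]

theorem alternatingMap_eq_smul_det (ω : M [⋀^ι]→ₗ[R] W) :
    ω = (LinearMap.toSpanSingleton R W (ω b)).compAlternatingMap b.det := by
  refine b.ext_alternating fun v hv => ?_
  let σ : Equiv.Perm ι := Equiv.ofBijective v (Finite.injective_iff_bijective.1 hv)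
  change ω (b ∘ σ) = b.det (b ∘ σ) • ω b
  simp [AlternatingMap.map_perm, det_self]

noncomputable def alternatingMapEquiv : (M [⋀^ι]→ₗ[R] W) ≃ₗ[R] W where
  toFun ω := ω b
  map_add' _ _ := rfl
  map_smul' _ _ := rfl
  invFun w := (LinearMap.toSpanSingleton R W w).compAlternatingMap b.det
  left_inv ω := (b.alternatingMap_eq_smul_det ω).symm
  right_inv w := by simp [det_self]

@[simp]
theorem alternatingMapEquiv_apply (ω : M [⋀^ι]→ₗ[R] W) : b.alternatingMapEquiv ω = ω b := rfl

end

section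

variable {n : ℕ} (b : Basis (Fin (n + 1)) R M)

theorem det_update_comp_cycleRange_symm (j i : Fin (n + 1)) (y : M) :
    b.det (Function.update (b ∘ j.cycleRange.symm) i y) =
      (-1) ^ (j : ℕ) * b.repr y (j.cycleRange.symm i) := by
  rw [det_update_comp_perm, Equiv.Perm.sign_symm, Fin.sign_cycleRange, Units.smul_def]
  simp [zsmul_eq_mul]

theorem det_cons_update_comp_succAbove (k j : Fin (n + 1)) (p : Fin n) (y : M) :
    b.det (Fin.cons (b k) (Function.update (b ∘ j.succAbove) p y)) =
      (-1) ^ (j : ℕ) * if k = j then b.repr y (j.succAbove p)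
        else if k = j.succAbove p then -b.repr y j else 0 := by
  have hcyc : (Fin.cons (b j) (b ∘ j.succAbove) : Fin (n + 1) → M) = b ∘ j.cycleRange.symm :=
    Fin.cons_removeNth_eq_comp_cycleRange_symm b j
  by_cases hkj : k = j
  · subst hkj
    rw [Fin.cons_update, hcyc, det_update_comp_cycleRange_symm, Fin.cycleRange_symm_succ,
      if_pos rfl]
  by_cases hki : k = j.succAbove p
  · subst hki
    have hswap : (Fin.cons (b (j.succAbove p)) (Function.update (b ∘ j.succAbove) p y) :
        Fin (n + 1) → M) ∘ Equiv.swap 0 p.succ = Function.update (b ∘ j.cycleRange.symm) 0 y := by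
      rw [← hcyc]
      ext s
      cases s using Fin.cases with
      | zero => simp
      | succ s =>
        rcases eq_or_ne s p with rfl | hsp
        · simp [Function.update_of_ne (Fin.succ_ne_zero s).symm]
        · simp [Equiv.swap_apply_of_ne_of_ne, hsp]
    rw [← neg_neg (b.det _), ← AlternatingMap.map_swap _ _ (Fin.succ_ne_zero p).symm, hswap,
      det_update_comp_cycleRange_symm, if_neg hkj, if_pos rfl]
    simp
  · obtain ⟨s, rfl⟩ := Fin.exists_succAbove_eq hkj
    have hsp : s ≠ p := fun h => hki (h ▸ rfl)
    rw [if_neg hkj, if_neg hki, mul_zero]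
    exact b.det.map_eq_zero_of_eq _ (i := 0) (j := s.succ) (by simp [hsp])
      (Fin.succ_ne_zero s).symm

theorem det_cons_comp_succAbove (k m : Fin (n + 1)) :
    b.det (Fin.cons (b k) (b ∘ m.succAbove)) = if k = m then (-1) ^ (m : ℕ) else 0 := by
  split_ifs with hkm
  · subst hkm
    rw [show b ∘ k.succAbove = k.removeNth b from rfl, Fin.cons_removeNth_eq_comp_cycleRange_symm,
      AlternatingMap.map_perm, det_self, Equiv.Perm.sign_symm, Fin.sign_cycleRange]
    simp [Units.smul_def]
  · obtain ⟨s, hs⟩ := Fin.exists_succAbove_eq hkm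
    exact b.det.map_eq_zero_of_eq _ (i := 0) (j := s.succ) (by simp [hs])
      (Fin.succ_ne_zero s).symm

theorem alternatingMap_eq_zero_of_apply_succAbove (ω : M [⋀^Fin n]→ₗ[R] W)
    (h : ∀ m : Fin (n + 1), ω (b ∘ m.succAbove) = 0) : ω = 0 := by
  refine b.ext_alternating fun v hv => ?_
  obtain ⟨m, hm⟩ : ∃ m, m ∉ Set.range v := by
    by_contra! hsurj
    simpa using Fintype.card_le_of_surjective v fun m => hsurj m
  choose u hu using fun t => Fin.exists_succAbove_eq fun h => hm ⟨t, h⟩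
  have hu_inj : Function.Injective u := fun s t hst => hv (by rw [← hu s, ← hu t, hst])
  let σ : Equiv.Perm (Fin n) := Equiv.ofBijective u (Finite.injective_iff_bijective.1 hu_inj)
  have hv : (fun t => b (v t)) = (b ∘ m.succAbove) ∘ σ := by
    funext t
    simp [σ, hu t]
  rw [hv, AlternatingMap.map_perm, h m, smul_zero, AlternatingMap.zero_apply]

noncomputable def curryDetSmul (k : Fin (n + 1)) (v : W) : M [⋀^Fin n]→ₗ[R] W :=
  (LinearMap.toSpanSingleton R W v).compAlternatingMap (b.det.curryLeft (b k))

theorem curryDetSmul_apply (k : Fin (n + 1)) (v : W) (x : Fin n → M) :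
    b.curryDetSmul k v x = b.det (Fin.cons (b k) x) • v := rfl

theorem curryDetSmul_apply_comp_succAbove (k m : Fin (n + 1)) (v : W) :
    b.curryDetSmul k v (b ∘ m.succAbove) = if k = m then (-1 : R) ^ (m : ℕ) • v else 0 := by
  rw [curryDetSmul_apply, det_cons_comp_succAbove]
  split_ifs <;> simp

theorem eq_sum_curryDetSmul (ω : M [⋀^Fin n]→ₗ[R] W) :
    ω = ∑ k, b.curryDetSmul k ((-1 : R) ^ (k : ℕ) • ω (b ∘ k.succAbove)) := by
  rw [← sub_eq_zero]
  refine b.alternatingMap_eq_zero_of_apply_succAbove _ fun m => ?_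
  simp [AlternatingMap.sum_apply, curryDetSmul_apply_comp_succAbove, smul_smul, ← mul_pow]

end

end Module.Basis

namespace LieAlgebra

variable {R L : Type*} [CommRing R] [LieRing L] [LieAlgebra R L]

theorem trace_ad_eq_sum_repr {ι : Type*} [Fintype ι] [DecidableEq ι] (b : Module.Basis ι R L)
    (x : L) : LinearMap.trace R L (ad R L x) = ∑ m, b.repr ⁅x, b m⁆ m := by
  simp [LinearMap.trace_eq_matrix_trace R b, Matrix.trace, LinearMap.toMatrix_apply]

theorem trace_ad_eq_zero_of_isNilpotent [IsReduced R] [LieRing.IsNilpotent L] (x : L) :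
    LinearMap.trace R L (ad R L x) = 0 :=
  (LinearMap.isNilpotent_trace_of_isNilpotent
    (LieModule.isNilpotent_toEnd_of_isNilpotent R L L x)).eq_zero

end LieAlgebra

namespace LieModule

variable {R L V : Type*} [CommRing R] [LieRing L] [LieAlgebra R L]
  [AddCommGroup V] [Module R V] [LieRingModule L V] [LieModule R L V]

def chevalleyEilenbergDiff {q : ℕ} (ω : L [⋀^Fin q]→ₗ[R] V) (x : Fin (q + 1) → L) : V :=
  (∑ i : Fin (q + 1), ((-1 : R) ^ (i : ℕ)) • ⁅x i, ω (x ∘ i.succAbove)⁆) +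
    ∑ j : Fin (q + 1), ∑ i : Fin (q + 1),
      if hij : (i : ℕ) < (j : ℕ) then
        ((-1 : R) ^ (j : ℕ)) •
          ω (Function.update (x ∘ j.succAbove)
              (⟨(i : ℕ), lt_of_lt_of_le hij (Nat.lt_succ_iff.mp j.isLt)⟩ : Fin q)
              ⁅x i, x j⁆)
      else 0

theorem chevalleyEilenbergDiff_curryDetSmul {n : ℕ} (b : Module.Basis (Fin (n + 1)) R L)
    (k : Fin (n + 1)) (v : V) :
    chevalleyEilenbergDiff (b.curryDetSmul k v) b =
      ⁅b k, v⁆ - LinearMap.trace R L (LieAlgebra.ad R L (b k)) • v := by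
  have haction : ∑ i : Fin (n + 1),
      ((-1 : R) ^ (i : ℕ)) • ⁅b i, b.curryDetSmul k v (b ∘ i.succAbove)⁆ = ⁅b k, v⁆ := by
    simp [b.curryDetSmul_apply_comp_succAbove, apply_ite, lie_smul, smul_smul, ← mul_pow]
  set c : Fin (n + 1) → Fin (n + 1) → Fin (n + 1) → R := fun i j => b.repr ⁅b i, b j⁆
  have hterm : ∀ i j : Fin (n + 1),
      (if hij : (i : ℕ) < (j : ℕ) then
        ((-1 : R) ^ (j : ℕ)) • b.curryDetSmul k v (Function.update (b ∘ j.succAbove)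
          (⟨(i : ℕ), lt_of_lt_of_le hij (Nat.lt_succ_iff.mp j.isLt)⟩ : Fin n) ⁅b i, b j⁆)
      else 0) =
      -(if i < j then (if k = j then c k i i else if k = i then c k j j else 0) else 0) • v := by
    -- only the coefficient of `b i` (if `k = j`) or of `b j` (if `k = i`) in `⁅b i, b j⁆`
    -- survives, and antisymmetry of the bracket makes it a diagonal entry of `ad (b k)`
    intro i j
    by_cases hij : i < j
    · have hsucc : j.succAbove ⟨i, by omega⟩ = i := Fin.succAbove_of_castSucc_lt _ _ hij
      rw [dif_pos (Fin.lt_def.mp hij), b.curryDetSmul_apply, b.det_cons_update_comp_succAbove,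
        hsucc, if_pos hij, smul_smul, ← mul_assoc, ← mul_pow]
      split_ifs with hkj hki
      · rw [← lie_skew (b i) (b j), hkj]
        simp only [c, map_neg, Finsupp.coe_neg, Pi.neg_apply, neg_mul_neg, one_mul, one_pow]
      · simp [c, hki]
      · simp
    · rw [dif_neg (by omega), if_neg hij, neg_zero, zero_smul]
  have htrace := LieAlgebra.trace_ad_eq_sum_repr b (b k)
  simp only [chevalleyEilenbergDiff, haction, hterm, ← Finset.sum_smul, Finset.sum_neg_distrib,
    Finset.sum_sum_ite_lt, htrace]
  simp [c, sub_eq_add_neg]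

theorem map_range_eq_span_lie {n : ℕ} (b : Module.Basis (Fin (n + 1)) R L)
    (D : (L [⋀^Fin n]→ₗ[R] V) →ₗ[R] L [⋀^Fin (n + 1)]→ₗ[R] V)
    (hD : ∀ k v, D (b.curryDetSmul k v) b = ⁅b k, v⁆) :
    (LinearMap.range D).map (b.alternatingMapEquiv (W := V)).toLinearMap =
      Submodule.span R {w | ∃ (x : L) (v : V), ⁅x, v⁆ = w} := by
  rw [← LinearMap.range_comp]
  apply le_antisymm
  · rintro _ ⟨ω, rfl⟩
    rw [LinearMap.comp_apply, b.eq_sum_curryDetSmul ω, map_sum, map_sum]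
    exact Submodule.sum_mem _ fun k _ => Submodule.subset_span ⟨b k, _, (hD k _).symm⟩
  · rw [Submodule.span_le]
    rintro _ ⟨x, v, rfl⟩
    refine ⟨∑ k, b.curryDetSmul k (b.repr x k • v), ?_⟩
    simp only [LinearMap.comp_apply, map_sum, LinearEquiv.coe_coe,
      Module.Basis.alternatingMapEquiv_apply, hD]
    conv_rhs => rw [← b.sum_repr x, sum_lie]
    simp [lie_smul, smul_lie]

end LieModule

theorem lie_algebra_top_cohomology_coinvariants_general
    (F : Type*) [Field F]
    (𝔲 : Type*) [LieRing 𝔲] [LieAlgebra F 𝔲]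
    [LieRing.IsNilpotent 𝔲]
    (c : ℕ) (hdim : Module.finrank F 𝔲 = c)
    (V : Type*) [AddCommGroup V] [Module F V]
    [LieRingModule 𝔲 V] [LieModule F 𝔲 V]
    (d : ∀ q : ℕ, AlternatingMap F 𝔲 V (Fin q) →ₗ[F] AlternatingMap F 𝔲 V (Fin (q + 1)))
    (hd : ∀ (q : ℕ) (ω : AlternatingMap F 𝔲 V (Fin q)) (x : Fin (q + 1) → 𝔲),
      d q ω x =
        (∑ i : Fin (q + 1), ((-1 : F) ^ (i : ℕ)) • ⁅x i, ω (x ∘ i.succAbove)⁆) +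
        ∑ j : Fin (q + 1), ∑ i : Fin (q + 1),
          if hij : (i : ℕ) < (j : ℕ) then
            ((-1 : F) ^ (j : ℕ)) •
              ω (Function.update (x ∘ j.succAbove)
                  (⟨(i : ℕ), lt_of_lt_of_le hij (Nat.lt_succ_iff.mp j.isLt)⟩ : Fin q)
                  ⁅x i, x j⁆)
          else 0) :
    ∀ q : ℕ, q + 1 = c →
      Nonempty ((V ⧸ Submodule.span F {w : V | ∃ (x : 𝔲) (v : V), ⁅x, v⁆ = w}) ≃ₗ[F]
        (TensorProduct F
          ((AlternatingMap F 𝔲 V (Fin (q + 1))) ⧸ LinearMap.range (d q))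
          (AlternatingMap F 𝔲 F (Fin (q + 1))))) := by
  intro q hq
  have : Module.Finite F 𝔲 := Module.finite_of_finrank_pos (by omega)
  let b : Module.Basis (Fin (q + 1)) F 𝔲 :=
    (Module.finBasis F 𝔲).reindex (finCongr (hdim.trans hq.symm))
  have hd_basis : ∀ k v, d q (b.curryDetSmul k v) b = ⁅b k, v⁆ := fun k v => by
    rw [hd]
    exact (LieModule.chevalleyEilenbergDiff_curryDetSmul b k v).trans
      (by rw [LieAlgebra.trace_ad_eq_zero_of_isNilpotent, zero_smul, sub_zero])
  have hrange := LieModule.map_range_eq_span_lie b (d q) hd_basis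
  exact ⟨(Submodule.Quotient.equiv _ _ _ hrange).symm ≪≫ₗ (TensorProduct.rid F _).symm ≪≫ₗ
    TensorProduct.congr (LinearEquiv.refl F _) b.alternatingMapEquiv.symm⟩

/-- Poincaré duality for Lie algebra cohomology of nilpotent Lie algebras.
Let `𝔲` be a finite-dimensional nilpotent Lie algebra of dimension `c` over a field `F`
of characteristic `0`, and `V` a finite-dimensional `𝔲`-module.  The Lie algebra
cohomology is computed by the Chevalley–Eilenberg complex of alternating cochains
`C^q = Λ^q 𝔲^* ⊗ V = AlternatingMap F 𝔲 V (Fin q)`; the differential `d` is pinned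
down by the usual formula (hypothesis `hd`; the inner sum is the Lie bracket term
written with the bracket `⁅x i, x j⁆` substituted in place of `x i`, the entry `x j`
omitted, and sign `(-1)^j`).  Then the coinvariants
`H_0(𝔲, V) = V / 𝔲·V` are isomorphic, as vector spaces, to
`H^c(𝔲, V) ⊗ Λ^c 𝔲^*`, the top cohomology twisted by the top exterior power of `𝔲^*`
(here `Λ^c 𝔲^*` is realized as the space of alternating `c`-forms `𝔲 → F`). -/
theorem lie_algebra_top_cohomology_coinvariants
    (F : Type*) [Field F] [CharZero F]
    (𝔲 : Type*) [LieRing 𝔲] [LieAlgebra F 𝔲] [Module.Finite F 𝔲]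
    [LieRing.IsNilpotent 𝔲]
    (c : ℕ) (hdim : Module.finrank F 𝔲 = c)
    (V : Type*) [AddCommGroup V] [Module F V] [Module.Finite F V]
    [LieRingModule 𝔲 V] [LieModule F 𝔲 V]
    (d : ∀ q : ℕ, AlternatingMap F 𝔲 V (Fin q) →ₗ[F] AlternatingMap F 𝔲 V (Fin (q + 1)))
    (hd : ∀ (q : ℕ) (ω : AlternatingMap F 𝔲 V (Fin q)) (x : Fin (q + 1) → 𝔲),
      d q ω x =
        (∑ i : Fin (q + 1), ((-1 : F) ^ (i : ℕ)) • ⁅x i, ω (x ∘ i.succAbove)⁆) +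
        ∑ j : Fin (q + 1), ∑ i : Fin (q + 1),
          if hij : (i : ℕ) < (j : ℕ) then
            ((-1 : F) ^ (j : ℕ)) •
              ω (Function.update (x ∘ j.succAbove)
                  (⟨(i : ℕ), lt_of_lt_of_le hij (Nat.lt_succ_iff.mp j.isLt)⟩ : Fin q)
                  ⁅x i, x j⁆)
          else 0) :
    ∀ q : ℕ, q + 1 = c →
      Nonempty ((V ⧸ Submodule.span F {w : V | ∃ (x : 𝔲) (v : V), ⁅x, v⁆ = w}) ≃ₗ[F]
        (TensorProduct F
          ((AlternatingMap F 𝔲 V (Fin (q + 1))) ⧸ LinearMap.range (d q))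
          (AlternatingMap F 𝔲 F (Fin (q + 1))))) :=
  lie_algebra_top_cohomology_coinvariants_general F 𝔲 c hdim V d hd
end

section
/- Let f : X → Y be an open continuous map of topological spaces that restricts to a homeomorphism on a subspace Z ⊆ X onto its image, and suppose Y is the quotient of X by a properly discontinuous action of a group Δ of homeomorphisms such that the stabilizer in Δ of each point of Z is trivial. Then f is a local homeomorphism near Z. -/
/-- Let `Δ` be a group acting by homeomorphisms on a (Hausdorff) space `X`, properly
discontinuously in the pointwise sense: every point has an open neighbourhood `U` such
that `γ U ∩ U ≠ ∅` for only finitely many `γ ∈ Δ`.  Let `Y = X/Δ` be the quotient and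
`f : X → Y` the (open, continuous) quotient map.  Suppose `f` restricts to a
homeomorphism of a subspace `Z ⊆ X` onto its image, and the stabilizer in `Δ` of every
point of `Z` is trivial.  Then `f` is a local homeomorphism near `Z`: every `z ∈ Z` has
an open neighbourhood mapped homeomorphically (injectively, with open image) onto an
open subset of `Y`. -/
theorem quotient_map_local_homeo_near_trivial_stabilizers
    (Δ X : Type*) [Group Δ] [TopologicalSpace X] [T2Space X]
    [MulAction Δ X] [ContinuousConstSMul Δ X]
    (hpd : ∀ x : X, ∃ U : Set X, IsOpen U ∧ x ∈ U ∧
      {γ : Δ | ((γ • ·) '' U ∩ U).Nonempty}.Finite)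
    (Z : Set X)
    (hopen : IsOpenMap (Quotient.mk (MulAction.orbitRel Δ X)))
    (hembed : Topology.IsEmbedding fun z : Z => Quotient.mk (MulAction.orbitRel Δ X) ↑z)
    (hstab : ∀ z ∈ Z, ∀ γ : Δ, γ • z = z → γ = 1) :
    ∀ z ∈ Z, ∃ U : Set X, IsOpen U ∧ z ∈ U ∧
      Set.InjOn (Quotient.mk (MulAction.orbitRel Δ X)) U ∧
      IsOpen (Quotient.mk (MulAction.orbitRel Δ X) '' U) := by
  classical
  intro z hz
  obtain ⟨U, hU, hzU, hfin⟩ := hpd z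
  -- For each nontrivial γ, find an open neighbourhood of z moved off itself by γ.
  have key : ∀ γ : Δ, ∃ W : Set X, IsOpen W ∧ z ∈ W ∧
      (γ ≠ 1 → ∀ w ∈ W, γ • w ∉ W) := by
    intro γ
    by_cases hγ : γ = 1
    · exact ⟨Set.univ, isOpen_univ, trivial, fun h => absurd hγ h⟩
    · have hne : γ • z ≠ z := fun h => hγ (hstab z hz γ h)
      obtain ⟨B, A, hB, hA, hγzB, hzA, hAB⟩ := t2_separation hne
      refine ⟨A ∩ (γ • ·) ⁻¹' B, hA.inter ((continuous_const_smul γ).isOpen_preimage B hB),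
        ⟨hzA, hγzB⟩, fun _ w hw hγw => ?_⟩
      exact Set.disjoint_left.mp hAB hw.2 hγw.1
  choose W hWo hWz hWp using key
  refine ⟨U ∩ ⋂ γ ∈ hfin.toFinset, W γ,
    hU.inter (isOpen_biInter_finset fun γ _ => hWo γ),
    ⟨hzU, Set.mem_biInter fun γ _ => hWz γ⟩, ?_, ?_⟩
  · intro u hu u' hu' heq
    have hrel : (MulAction.orbitRel Δ X).r u u' := Quotient.eq''.mp heq
    obtain ⟨γ, hγ⟩ : u ∈ MulAction.orbit Δ u' := hrel
    by_cases h1 : γ = 1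
    · simp only [h1, one_smul] at hγ; exact hγ.symm
    · exfalso
      have hmem : γ ∈ hfin.toFinset := by
        rw [Set.Finite.mem_toFinset]
        exact ⟨u, ⟨u', hu'.1, hγ⟩, hu.1⟩
      have hu'W : u' ∈ W γ := Set.mem_iInter₂.mp hu'.2 γ hmem
      have huW : u ∈ W γ := Set.mem_iInter₂.mp hu.2 γ hmem
      have : γ • u' ∈ W γ := by simpa [hγ] using huW
      exact hWp γ h1 u' hu'W this
  · exact hopen _ (hU.inter (isOpen_biInter_finset fun γ _ => hWo γ))
end
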